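/- arXiv:2404.15567 — 2 statements merged into one kernel-verified Lean document; each statement's English description precedes it below -/
import Mathlib

section
/- Let T be a multiplicative BiHom-associative trialgebra over a field F, let (V, α_V, β_V) be a BiHom-module, and let f_⊣, f_⊢, f_⊥ : T × T → V be bilinear maps. Then T_F, with the operations (x+u) ∗' (y+v) = x∗y + f_∗(x,y) and structure maps α⊕α_V and β⊕β_V, is a multiplicative BiHom-associative trialgebra if and only if F = (f_⊣, f_⊢, f_⊥) is a 2-cocycle on T with values in V. -/
/-- The raw data of a BiHom-associative trialgebra over a field `F`:
three bilinear operations `dv` (⊣), `vd` (⊢), `pp` (⊥) and two linear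
structure maps `al` (α), `be` (β). -/
structure BHTData (F : Type*) [Field F] (T : Type*) [AddCommGroup T] [Module F T] where
  dv : T →ₗ[F] T →ₗ[F] T
  vd : T →ₗ[F] T →ₗ[F] T
  pp : T →ₗ[F] T →ₗ[F] T
  al : T →ₗ[F] T
  be : T →ₗ[F] T

variable {F : Type*} [Field F] {T : Type*} [AddCommGroup T] [Module F T]
variable {V : Type*} [AddCommGroup V] [Module F V]
variable {S : Type*} [AddCommGroup S] [Module F S]

/-- The axioms of a BiHom-associative trialgebra. -/
def BHTData.IsBHT (A : BHTData F T) : Prop :=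
  (∀ x, A.al (A.be x) = A.be (A.al x)) ∧
  (∀ x y z, A.dv (A.dv x y) (A.be z) = A.dv (A.al x) (A.dv y z)) ∧
  (∀ x y z, A.dv (A.dv x y) (A.be z) = A.dv (A.al x) (A.vd y z)) ∧
  (∀ x y z, A.dv (A.vd x y) (A.be z) = A.vd (A.al x) (A.dv y z)) ∧
  (∀ x y z, A.vd (A.dv x y) (A.be z) = A.vd (A.al x) (A.vd y z)) ∧
  (∀ x y z, A.vd (A.vd x y) (A.be z) = A.vd (A.al x) (A.vd y z)) ∧
  (∀ x y z, A.dv (A.dv x y) (A.be z) = A.dv (A.al x) (A.pp y z)) ∧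
  (∀ x y z, A.dv (A.pp x y) (A.be z) = A.pp (A.al x) (A.dv y z)) ∧
  (∀ x y z, A.pp (A.dv x y) (A.be z) = A.pp (A.al x) (A.vd y z)) ∧
  (∀ x y z, A.pp (A.vd x y) (A.be z) = A.vd (A.al x) (A.pp y z)) ∧
  (∀ x y z, A.vd (A.pp x y) (A.be z) = A.vd (A.al x) (A.vd y z)) ∧
  (∀ x y z, A.pp (A.pp x y) (A.be z) = A.pp (A.al x) (A.pp y z))

/-- Multiplicativity: the structure maps are homomorphisms for all three products. -/
def BHTData.IsMult (A : BHTData F T) : Prop :=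
  (∀ x y, A.al (A.dv x y) = A.dv (A.al x) (A.al y)) ∧
  (∀ x y, A.al (A.vd x y) = A.vd (A.al x) (A.al y)) ∧
  (∀ x y, A.al (A.pp x y) = A.pp (A.al x) (A.al y)) ∧
  (∀ x y, A.be (A.dv x y) = A.dv (A.be x) (A.be y)) ∧
  (∀ x y, A.be (A.vd x y) = A.vd (A.be x) (A.be y)) ∧
  (∀ x y, A.be (A.pp x y) = A.pp (A.be x) (A.be y))

/-- A 2-cocycle on `A` with values in the BiHom-module `(V, aV, bV)`:
a triple `(fd, fv, fp)` of bilinear maps `T × T → V`. -/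
def IsCocycle (A : BHTData F T) (aV bV : V →ₗ[F] V)
    (fd fv fp : T →ₗ[F] T →ₗ[F] V) : Prop :=
  (∀ x y, fd (A.al x) (A.al y) = aV (fd x y)) ∧
  (∀ x y, fv (A.al x) (A.al y) = aV (fv x y)) ∧
  (∀ x y, fp (A.al x) (A.al y) = aV (fp x y)) ∧
  (∀ x y, fd (A.be x) (A.be y) = bV (fd x y)) ∧
  (∀ x y, fv (A.be x) (A.be y) = bV (fv x y)) ∧
  (∀ x y, fp (A.be x) (A.be y) = bV (fp x y)) ∧
  (∀ x y z, fd (A.dv x y) (A.be z) = fd (A.al x) (A.dv y z)) ∧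
  (∀ x y z, fd (A.dv x y) (A.be z) = fd (A.al x) (A.vd y z)) ∧
  (∀ x y z, fd (A.vd x y) (A.be z) = fv (A.al x) (A.dv y z)) ∧
  (∀ x y z, fv (A.dv x y) (A.be z) = fv (A.al x) (A.vd y z)) ∧
  (∀ x y z, fv (A.vd x y) (A.be z) = fv (A.al x) (A.vd y z)) ∧
  (∀ x y z, fd (A.dv x y) (A.be z) = fd (A.al x) (A.pp y z)) ∧
  (∀ x y z, fd (A.pp x y) (A.be z) = fp (A.al x) (A.dv y z)) ∧
  (∀ x y z, fp (A.dv x y) (A.be z) = fp (A.al x) (A.vd y z)) ∧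
  (∀ x y z, fp (A.vd x y) (A.be z) = fv (A.al x) (A.pp y z)) ∧
  (∀ x y z, fv (A.pp x y) (A.be z) = fv (A.al x) (A.vd y z)) ∧
  (∀ x y z, fp (A.pp x y) (A.be z) = fp (A.al x) (A.pp y z))

/-- A 2-coboundary: the triple of bilinear maps induced by a linear map
`μ : T → V` commuting with the structure maps. -/
def IsCoboundary (A : BHTData F T) (aV bV : V →ₗ[F] V)
    (fd fv fp : T →ₗ[F] T →ₗ[F] V) : Prop :=
  ∃ μ : T →ₗ[F] V,
    (∀ x, μ (A.al x) = aV (μ x)) ∧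
    (∀ x, μ (A.be x) = bV (μ x)) ∧
    (∀ x y, fd x y = μ (A.dv x y)) ∧
    (∀ x y, fv x y = μ (A.vd x y)) ∧
    (∀ x y, fp x y = μ (A.pp x y))

/-- The bilinear operation `(x+u) ∗' (y+v) = x∗y + f(x,y)` on `T ⊕ V`. -/
def extBil (g : T →ₗ[F] T →ₗ[F] T) (f : T →ₗ[F] T →ₗ[F] V) :
    (T × V) →ₗ[F] (T × V) →ₗ[F] (T × V) :=
  LinearMap.mk₂ F (fun p q => (g p.1 q.1, f p.1 q.1))
    (fun p p' q => by simp [Prod.ext_iff])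
    (fun c p q => by simp [Prod.ext_iff])
    (fun p q q' => by simp [Prod.ext_iff])
    (fun c p q => by simp [Prod.ext_iff])

/-- The trialgebra data `T_F` on `T ⊕ V` built from a triple of bilinear maps. -/
def extData (A : BHTData F T) (aV bV : V →ₗ[F] V)
    (fd fv fp : T →ₗ[F] T →ₗ[F] V) : BHTData F (T × V) where
  dv := extBil A.dv fd
  vd := extBil A.vd fv
  pp := extBil A.pp fp
  al := A.al.prodMap aV
  be := A.be.prodMap bV

/-- A homomorphism of BiHom-associative trialgebras. -/
def IsHom (A : BHTData F T) (B : BHTData F S) (φ : T →ₗ[F] S) : Prop :=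
  (∀ x y, φ (A.dv x y) = B.dv (φ x) (φ y)) ∧
  (∀ x y, φ (A.vd x y) = B.vd (φ x) (φ y)) ∧
  (∀ x y, φ (A.pp x y) = B.pp (φ x) (φ y)) ∧
  (∀ x, φ (A.al x) = B.al (φ x)) ∧
  (∀ x, φ (A.be x) = B.be (φ x))

/-- The center of a BiHom-associative trialgebra. -/
def center (A : BHTData F T) : Set T :=
  {z | ∀ t, A.dv z t = 0 ∧ A.dv t z = 0 ∧ A.vd z t = 0 ∧ A.vd t z = 0 ∧
        A.pp z t = 0 ∧ A.pp t z = 0}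

/-- An ideal of a BiHom-associative trialgebra: a subspace closed under the
structure maps and absorbing under all three products. -/
def IsIdeal (A : BHTData F T) (I : Submodule F T) : Prop :=
  (∀ x ∈ I, A.al x ∈ I) ∧ (∀ x ∈ I, A.be x ∈ I) ∧
  (∀ x ∈ I, ∀ y, A.dv x y ∈ I ∧ A.dv y x ∈ I ∧ A.vd x y ∈ I ∧ A.vd y x ∈ I ∧
      A.pp x y ∈ I ∧ A.pp y x ∈ I)

/-- `D` is a generalized αβ-derivation via the pair `(D', D'')`. -/
def IsGenDer (A : BHTData F T) (D D' D'' : T →ₗ[F] T) : Prop :=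
  (∀ x, D (A.al x) = A.al (D x)) ∧ (∀ x, D (A.be x) = A.be (D x)) ∧
  (∀ x, D' (A.al x) = A.al (D' x)) ∧ (∀ x, D' (A.be x) = A.be (D' x)) ∧
  (∀ x, D'' (A.al x) = A.al (D'' x)) ∧ (∀ x, D'' (A.be x) = A.be (D'' x)) ∧
  (∀ a b, D'' (A.dv a b) = A.dv (D a) (A.al (A.be b)) + A.dv (A.al (A.be a)) (D' b)) ∧
  (∀ a b, D'' (A.vd a b) = A.vd (D a) (A.al (A.be b)) + A.vd (A.al (A.be a)) (D' b)) ∧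
  (∀ a b, D'' (A.pp a b) = A.pp (D a) (A.al (A.be b)) + A.pp (A.al (A.be a)) (D' b))

/-- Transport of structure along a bijective linear map `e`:
`x ∗' y = e (e⁻¹ x ∗ e⁻¹ y)`, `α' = e ∘ α ∘ e⁻¹`, `β' = e ∘ β ∘ e⁻¹`. -/
def transport (A : BHTData F T) (e : T ≃ₗ[F] T) : BHTData F T where
  dv := LinearMap.mk₂ F (fun x y => e (A.dv (e.symm x) (e.symm y)))
    (fun x x' y => by simp) (fun c x y => by simp)
    (fun x y y' => by simp) (fun c x y => by simp)
  vd := LinearMap.mk₂ F (fun x y => e (A.vd (e.symm x) (e.symm y)))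
    (fun x x' y => by simp) (fun c x y => by simp)
    (fun x y y' => by simp) (fun c x y => by simp)
  pp := LinearMap.mk₂ F (fun x y => e (A.pp (e.symm x) (e.symm y)))
    (fun x x' y => by simp) (fun c x y => by simp)
    (fun x y y' => by simp) (fun c x y => by simp)
  al := e.toLinearMap ∘ₗ A.al ∘ₗ e.symm.toLinearMap
  be := e.toLinearMap ∘ₗ A.be ∘ₗ e.symm.toLinearMap

/-- Inverse transport of structure along a bijective linear map `e`:
`x ∗₁ y = e⁻¹ (e x ∗₂ e y)`, `α₁ = e⁻¹ ∘ α₂ ∘ e`, `β₁ = e⁻¹ ∘ β₂ ∘ e`. -/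
def transportInv (A : BHTData F T) (e : T ≃ₗ[F] T) : BHTData F T where
  dv := LinearMap.mk₂ F (fun x y => e.symm (A.dv (e x) (e y)))
    (fun x x' y => by simp) (fun c x y => by simp)
    (fun x y y' => by simp) (fun c x y => by simp)
  vd := LinearMap.mk₂ F (fun x y => e.symm (A.vd (e x) (e y)))
    (fun x x' y => by simp) (fun c x y => by simp)
    (fun x y y' => by simp) (fun c x y => by simp)
  pp := LinearMap.mk₂ F (fun x y => e.symm (A.pp (e x) (e y)))
    (fun x x' y => by simp) (fun c x y => by simp)
    (fun x y y' => by simp) (fun c x y => by simp)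
  al := e.symm.toLinearMap ∘ₗ A.al ∘ₗ e.toLinearMap
  be := e.symm.toLinearMap ∘ₗ A.be ∘ₗ e.toLinearMap

/-- `T_F` is a multiplicative BiHom-associative trialgebra
iff `F = (f_⊣, f_⊢, f_⊥)` is a 2-cocycle. -/
theorem extData_isBHT_iff_cocycle
    (A : BHTData F T) (hA : A.IsBHT) (hM : A.IsMult)
    (aV bV : V →ₗ[F] V) (hV : ∀ v, aV (bV v) = bV (aV v))
    (fd fv fp : T →ₗ[F] T →ₗ[F] V) :
    ((extData A aV bV fd fv fp).IsBHT ∧ (extData A aV bV fd fv fp).IsMult) ↔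
      IsCocycle A aV bV fd fv fp := by
  obtain ⟨h0,h1,h2,h3,h4,h5,h6,h7,h8,h9,h10,h11⟩ := hA
  obtain ⟨m1,m2,m3,m4,m5,m6⟩ := hM
  simp only [extData, extBil, BHTData.IsBHT, BHTData.IsMult, IsCocycle,
    LinearMap.mk₂_apply, LinearMap.prodMap_apply, Prod.mk.injEq, Prod.forall,
    Prod.map_apply]
  constructor
  · rintro ⟨⟨b0,b1,b2,b3,b4,b5,b6,b7,b8,b9,b10,b11⟩,⟨c1,c2,c3,c4,c5,c6⟩⟩
    exact ⟨fun x y => (c1 x 0 y 0).2.symm, fun x y => (c2 x 0 y 0).2.symm,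
      fun x y => (c3 x 0 y 0).2.symm, fun x y => (c4 x 0 y 0).2.symm,
      fun x y => (c5 x 0 y 0).2.symm, fun x y => (c6 x 0 y 0).2.symm,
      fun x y z => (b1 x 0 y 0 z 0).2, fun x y z => (b2 x 0 y 0 z 0).2,
      fun x y z => (b3 x 0 y 0 z 0).2, fun x y z => (b4 x 0 y 0 z 0).2,
      fun x y z => (b5 x 0 y 0 z 0).2, fun x y z => (b6 x 0 y 0 z 0).2,
      fun x y z => (b7 x 0 y 0 z 0).2, fun x y z => (b8 x 0 y 0 z 0).2,
      fun x y z => (b9 x 0 y 0 z 0).2, fun x y z => (b10 x 0 y 0 z 0).2,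
      fun x y z => (b11 x 0 y 0 z 0).2⟩
  · rintro ⟨c1,c2,c3,c4,c5,c6,b1,b2,b3,b4,b5,b6,b7,b8,b9,b10,b11⟩
    refine ⟨⟨fun x u => ⟨h0 x, hV u⟩, ?_, ?_, ?_, ?_, ?_, ?_, ?_, ?_, ?_, ?_, ?_⟩,
      ?_, ?_, ?_, ?_, ?_, ?_⟩ <;>
      intros <;> exact ⟨by solve_by_elim, by solve_by_elim [Eq.symm]⟩
end

section
/- Let T be a multiplicative BiHom-associative trialgebra over a field F, (V, α_V, β_V) a BiHom-module, F = (f_⊣, f_⊢, f_⊥) a 2-cocycle on T with values in V, and B = (b_⊣, b_⊢, b_⊥) the 2-coboundary given by b_∗(x,y) = μ(x∗y) for a linear map μ : T → V with μ∘α = α_V∘μ and μ∘β = β_V∘μ. Then T_{F+B} is a multiplicative BiHom-associative trialgebra, and the map φ : T_F → T_{F+B} defined by φ(x+v) = x + μ(x) + v is an isomorphism of BiHom-associative trialgebras. -/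
variable {F : Type*} [Field F] {T : Type*} [AddCommGroup T] [Module F T]
variable {V : Type*} [AddCommGroup V] [Module F V]
variable {S : Type*} [AddCommGroup S] [Module F S]

section Shear

variable {R M N : Type*} [Semiring R] [AddCommMonoid M] [AddCommGroup N] [Module R M] [Module R N]

def shear (μ : M →ₗ[R] N) : M × N →ₗ[R] M × N :=
  (LinearMap.fst R M N).prod (μ ∘ₗ LinearMap.fst R M N + LinearMap.snd R M N)

theorem shear_bijective (μ : M →ₗ[R] N) : Function.Bijective (shear μ) := by
  convert (LinearEquiv.skewProd (.refl R M) (.refl R N) μ).bijective using 1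
  ext p
  · rfl
  · exact add_comm _ _

end Shear

section Cocycle

variable {A : BHTData F T} {aV bV : V →ₗ[F] V}

theorem IsCocycle.add {fd fv fp gd gv gp : T →ₗ[F] T →ₗ[F] V}
    (hf : IsCocycle A aV bV fd fv fp) (hg : IsCocycle A aV bV gd gv gp) :
    IsCocycle A aV bV (fd + gd) (fv + gv) (fp + gp) := by
  obtain ⟨f1, f2, f3, f4, f5, f6, f7, f8, f9, f10, f11, f12, f13, f14, f15, f16, f17⟩ := hf
  obtain ⟨g1, g2, g3, g4, g5, g6, g7, g8, g9, g10, g11, g12, g13, g14, g15, g16, g17⟩ := hg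
  exact ⟨fun x y => (congrArg₂ (· + ·) (f1 x y) (g1 x y)).trans (map_add aV _ _).symm,
    fun x y => (congrArg₂ (· + ·) (f2 x y) (g2 x y)).trans (map_add aV _ _).symm,
    fun x y => (congrArg₂ (· + ·) (f3 x y) (g3 x y)).trans (map_add aV _ _).symm,
    fun x y => (congrArg₂ (· + ·) (f4 x y) (g4 x y)).trans (map_add bV _ _).symm,
    fun x y => (congrArg₂ (· + ·) (f5 x y) (g5 x y)).trans (map_add bV _ _).symm,
    fun x y => (congrArg₂ (· + ·) (f6 x y) (g6 x y)).trans (map_add bV _ _).symm,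
    fun x y z => congrArg₂ (· + ·) (f7 x y z) (g7 x y z),
    fun x y z => congrArg₂ (· + ·) (f8 x y z) (g8 x y z),
    fun x y z => congrArg₂ (· + ·) (f9 x y z) (g9 x y z),
    fun x y z => congrArg₂ (· + ·) (f10 x y z) (g10 x y z),
    fun x y z => congrArg₂ (· + ·) (f11 x y z) (g11 x y z),
    fun x y z => congrArg₂ (· + ·) (f12 x y z) (g12 x y z),
    fun x y z => congrArg₂ (· + ·) (f13 x y z) (g13 x y z),
    fun x y z => congrArg₂ (· + ·) (f14 x y z) (g14 x y z),
    fun x y z => congrArg₂ (· + ·) (f15 x y z) (g15 x y z),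
    fun x y z => congrArg₂ (· + ·) (f16 x y z) (g16 x y z),
    fun x y z => congrArg₂ (· + ·) (f17 x y z) (g17 x y z)⟩

theorem isCoboundary_compr₂ (A : BHTData F T) (aV bV : V →ₗ[F] V) (μ : T →ₗ[F] V)
    (hμa : ∀ x, μ (A.al x) = aV (μ x)) (hμb : ∀ x, μ (A.be x) = bV (μ x)) :
    IsCoboundary A aV bV (A.dv.compr₂ μ) (A.vd.compr₂ μ) (A.pp.compr₂ μ) :=
  ⟨μ, hμa, hμb, fun _ _ => rfl, fun _ _ => rfl, fun _ _ => rfl⟩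

theorem IsCoboundary.isCocycle {fd fv fp : T →ₗ[F] T →ₗ[F] V} (hA : A.IsBHT) (hM : A.IsMult)
    (h : IsCoboundary A aV bV fd fv fp) : IsCocycle A aV bV fd fv fp := by
  obtain ⟨μ, hμa, hμb, hd, hv, hp⟩ := h
  obtain rfl : fd = A.dv.compr₂ μ := LinearMap.ext₂ hd
  obtain rfl : fv = A.vd.compr₂ μ := LinearMap.ext₂ hv
  obtain rfl : fp = A.pp.compr₂ μ := LinearMap.ext₂ hp
  obtain ⟨-, a1, a2, a3, a4, a5, a6, a7, a8, a9, a10, a11⟩ := hA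
  obtain ⟨m1, m2, m3, m4, m5, m6⟩ := hM
  exact ⟨fun x y => (congrArg μ (m1 x y)).symm.trans (hμa _),
    fun x y => (congrArg μ (m2 x y)).symm.trans (hμa _),
    fun x y => (congrArg μ (m3 x y)).symm.trans (hμa _),
    fun x y => (congrArg μ (m4 x y)).symm.trans (hμb _),
    fun x y => (congrArg μ (m5 x y)).symm.trans (hμb _),
    fun x y => (congrArg μ (m6 x y)).symm.trans (hμb _),
    fun x y z => congrArg μ (a1 x y z), fun x y z => congrArg μ (a2 x y z),
    fun x y z => congrArg μ (a3 x y z), fun x y z => congrArg μ (a4 x y z),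
    fun x y z => congrArg μ (a5 x y z), fun x y z => congrArg μ (a6 x y z),
    fun x y z => congrArg μ (a7 x y z), fun x y z => congrArg μ (a8 x y z),
    fun x y z => congrArg μ (a9 x y z), fun x y z => congrArg μ (a10 x y z),
    fun x y z => congrArg μ (a11 x y z)⟩

end Cocycle

section Extension

variable {A : BHTData F T} {aV bV : V →ₗ[F] V} {fd fv fp : T →ₗ[F] T →ₗ[F] V}

theorem extData_isBHT (hA : A.IsBHT) (hV : ∀ v, aV (bV v) = bV (aV v))
    (hF : IsCocycle A aV bV fd fv fp) : (extData A aV bV fd fv fp).IsBHT := by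
  obtain ⟨hc, a1, a2, a3, a4, a5, a6, a7, a8, a9, a10, a11⟩ := hA
  obtain ⟨-, -, -, -, -, -, c1, c2, c3, c4, c5, c6, c7, c8, c9, c10, c11⟩ := hF
  exact ⟨fun x => Prod.ext (hc _) (hV _),
    fun x y z => Prod.ext (a1 _ _ _) (c1 _ _ _), fun x y z => Prod.ext (a2 _ _ _) (c2 _ _ _),
    fun x y z => Prod.ext (a3 _ _ _) (c3 _ _ _), fun x y z => Prod.ext (a4 _ _ _) (c4 _ _ _),
    fun x y z => Prod.ext (a5 _ _ _) (c5 _ _ _), fun x y z => Prod.ext (a6 _ _ _) (c6 _ _ _),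
    fun x y z => Prod.ext (a7 _ _ _) (c7 _ _ _), fun x y z => Prod.ext (a8 _ _ _) (c8 _ _ _),
    fun x y z => Prod.ext (a9 _ _ _) (c9 _ _ _), fun x y z => Prod.ext (a10 _ _ _) (c10 _ _ _),
    fun x y z => Prod.ext (a11 _ _ _) (c11 _ _ _)⟩

theorem extData_isMult (hM : A.IsMult) (hF : IsCocycle A aV bV fd fv fp) :
    (extData A aV bV fd fv fp).IsMult := by
  obtain ⟨m1, m2, m3, m4, m5, m6⟩ := hM
  obtain ⟨c1, c2, c3, c4, c5, c6, -⟩ := hF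
  exact ⟨fun x y => Prod.ext (m1 _ _) (c1 _ _).symm, fun x y => Prod.ext (m2 _ _) (c2 _ _).symm,
    fun x y => Prod.ext (m3 _ _) (c3 _ _).symm, fun x y => Prod.ext (m4 _ _) (c4 _ _).symm,
    fun x y => Prod.ext (m5 _ _) (c5 _ _).symm, fun x y => Prod.ext (m6 _ _) (c6 _ _).symm⟩

theorem isHom_shear {μ : T →ₗ[F] V} (hμa : ∀ x, μ (A.al x) = aV (μ x))
    (hμb : ∀ x, μ (A.be x) = bV (μ x)) :
    IsHom (extData A aV bV fd fv fp)
      (extData A aV bV (fd + A.dv.compr₂ μ) (fv + A.vd.compr₂ μ) (fp + A.pp.compr₂ μ))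
      (shear μ) := by
  refine ⟨fun x y => Prod.ext rfl (add_comm _ _), fun x y => Prod.ext rfl (add_comm _ _),
    fun x y => Prod.ext rfl (add_comm _ _), fun x => Prod.ext rfl ?_, fun x => Prod.ext rfl ?_⟩
  · show μ (A.al x.1) + aV x.2 = aV (μ x.1 + x.2)
    rw [map_add, hμa]
  · show μ (A.be x.1) + bV x.2 = bV (μ x.1 + x.2)
    rw [map_add, hμb]

end Extension

/-- for a 2-cocycle `F` and the 2-coboundary `B` induced by `μ`,
`T_{F+B}` is a multiplicative BiHom-associative trialgebra and
`φ(x+v) = x + μ(x) + v` is an isomorphism `T_F → T_{F+B}`. -/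
theorem extData_add_coboundary_iso
    (A : BHTData F T) (hA : A.IsBHT) (hM : A.IsMult)
    (aV bV : V →ₗ[F] V) (hV : ∀ v, aV (bV v) = bV (aV v))
    (fd fv fp : T →ₗ[F] T →ₗ[F] V) (hF : IsCocycle A aV bV fd fv fp)
    (μ : T →ₗ[F] V) (hμa : ∀ x, μ (A.al x) = aV (μ x))
    (hμb : ∀ x, μ (A.be x) = bV (μ x)) :
    (extData A aV bV (fd + A.dv.compr₂ μ) (fv + A.vd.compr₂ μ) (fp + A.pp.compr₂ μ)).IsBHT ∧
    (extData A aV bV (fd + A.dv.compr₂ μ) (fv + A.vd.compr₂ μ) (fp + A.pp.compr₂ μ)).IsMult ∧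
    (Function.Bijective
      ⇑((LinearMap.fst F T V).prod (μ ∘ₗ LinearMap.fst F T V + LinearMap.snd F T V)) ∧
     IsHom (extData A aV bV fd fv fp)
       (extData A aV bV (fd + A.dv.compr₂ μ) (fv + A.vd.compr₂ μ) (fp + A.pp.compr₂ μ))
       ((LinearMap.fst F T V).prod (μ ∘ₗ LinearMap.fst F T V + LinearMap.snd F T V))) := by
  have hFB := hF.add ((isCoboundary_compr₂ A aV bV μ hμa hμb).isCocycle hA hM)
  exact ⟨extData_isBHT hA hV hFB, extData_isMult hM hFB, shear_bijective μ, isHom_shear hμa hμb⟩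
end
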